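/- Let u ∈ B(H) be a unitary operator on a Hilbert space H, and let (p_n) be a sequence of finite-rank orthogonal projections on H increasing to the identity in the *-strong operator topology. Then for each n there is a unitary operator u_n on p_n H (viewed as an operator on H that is zero on the orthogonal complement, or equivalently u_n ⊕ (1 − p_n)) such that u_n → u in the *-strong operator topology. -/

import Mathlib

/-!
Compress `u` to the finite-dimensional space `K = pₙH`: `T = pₙ u pₙ` is a contraction of `K`.
A singular value decomposition `T bᵢ = sᵢ cᵢ` with `0 ≤ sᵢ ≤ 1` yields the unitary `W : bᵢ ↦ cᵢ`
(the polar part of `T`), and since `(1 - s)² ≤ 1 - s²` on `[0, 1]`, Parseval gives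
`‖W y - T y‖² ≤ ‖y‖² - ‖T y‖²`, and symmetrically for `W⁻¹` and `T†`. Take `vₙ = W ⊕ 1` on
`K ⊕ Kᗮ`. As `pₙ → 1` strongly, `pₙ u pₙ ξ → u ξ`, so `‖pₙ ξ‖² - ‖pₙ u pₙ ξ‖² → ‖ξ‖² - ‖u ξ‖² = 0`
and `vₙ ξ - u ξ → 0`; the same argument applied to `u†` handles the adjoints.
-/

open Filter Topology

noncomputable section

open scoped InnerProductSpace

variable {𝕜 E : Type*} [RCLike 𝕜] [NormedAddCommGroup E] [InnerProductSpace 𝕜 E]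

theorem OrthonormalBasis.norm_sub_sq_le_of_inner_eq {ι : Type*} [Fintype ι]
    (b c : OrthonormalBasis ι 𝕜 E) {s : ι → ℝ} (hs₀ : ∀ i, 0 ≤ s i) (hs₁ : ∀ i, s i ≤ 1)
    {x y z : E} (hy : ∀ i, ⟪c i, y⟫_𝕜 = ⟪b i, x⟫_𝕜) (hz : ∀ i, ⟪c i, z⟫_𝕜 = s i * ⟪b i, x⟫_𝕜) :
    ‖y - z‖ ^ 2 ≤ ‖x‖ ^ 2 - ‖z‖ ^ 2 := by
  rw [← c.sum_sq_norm_inner_right, ← b.sum_sq_norm_inner_right, ← c.sum_sq_norm_inner_right,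
    ← Finset.sum_sub_distrib]
  refine Finset.sum_le_sum fun i _ => ?_
  have hcoord : ⟪c i, y - z⟫_𝕜 = ((1 - s i : ℝ) : 𝕜) * ⟪b i, x⟫_𝕜 := by
    rw [inner_sub_right, hy, hz]; push_cast; ring
  rw [hcoord, hz, norm_mul, norm_mul, RCLike.norm_ofReal, RCLike.norm_ofReal,
    abs_of_nonneg (sub_nonneg.2 (hs₁ i)), abs_of_nonneg (hs₀ i)]
  have : (1 - s i) ^ 2 ≤ 1 - s i ^ 2 := by nlinarith [hs₀ i, hs₁ i]
  nlinarith [sq_nonneg ‖⟪b i, x⟫_𝕜‖]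

section FiniteDimensional

variable [FiniteDimensional 𝕜 E]

theorem OrthonormalBasis.adjoint_apply_eq_smul {ι : Type*} [Fintype ι] [DecidableEq ι]
    (b c : OrthonormalBasis ι 𝕜 E) {T : E →ₗ[𝕜] E} {s : ι → ℝ}
    (hT : ∀ i, T (b i) = (s i : 𝕜) • c i) (i : ι) :
    T.adjoint (c i) = (s i : 𝕜) • b i := by
  refine InnerProductSpace.ext_inner_left_basis b.toBasis fun j => ?_
  simp only [OrthonormalBasis.coe_toBasis, LinearMap.adjoint_inner_right, hT, inner_smul_left,
    inner_smul_right, RCLike.conj_ofReal, orthonormal_iff_ite.1 c.orthonormal,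
    orthonormal_iff_ite.1 b.orthonormal]
  split_ifs with h <;> simp [h]

theorem LinearMap.exists_orthonormalBasis_apply_eq_smul (T : E →ₗ[𝕜] E) :
    ∃ (b c : OrthonormalBasis (Fin (Module.finrank 𝕜 E)) 𝕜 E) (s : Fin (Module.finrank 𝕜 E) → ℝ),
      (∀ i, 0 ≤ s i) ∧ (∀ i, T (b i) = (s i : 𝕜) • c i) ∧
        ∀ i, T.adjoint (c i) = (s i : 𝕜) • b i := by
  set b := T.isSymmetric_adjoint_comp_self.eigenvectorBasis rfl
  set s : Fin (Module.finrank 𝕜 E) → ℝ := fun i => T.singularValues i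
  have hinner : ∀ i j, ⟪T (b i), T (b j)⟫_𝕜 = if i = j then ((s i ^ 2 : ℝ) : 𝕜) else 0 := by
    intro i j
    rw [← LinearMap.adjoint_inner_right, ← LinearMap.comp_apply,
      T.isSymmetric_adjoint_comp_self.apply_eigenvectorBasis, inner_smul_right,
      orthonormal_iff_ite.1 b.orthonormal]
    split_ifs with h <;> simp [h, s, T.sq_singularValues_fin]
  have hnorm : ∀ i, ‖T (b i)‖ = s i := by
    intro i
    have := hinner i i
    rw [if_pos rfl, inner_self_eq_norm_sq_to_K] at this
    exact (sq_eq_sq₀ (norm_nonneg _) (T.singularValues_nonneg i)).1 (by exact_mod_cast this)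
  set f : Fin (Module.finrank 𝕜 E) → E := fun i => ((s i)⁻¹ : 𝕜) • T (b i)
  have hf : Orthonormal 𝕜 ({i | s i ≠ 0}.domRestrict f) := by
    rw [orthonormal_iff_ite]
    rintro ⟨i, hi⟩ ⟨j, hj⟩
    simp only [Set.domRestrict_apply, f, inner_smul_left, inner_smul_right, hinner,
      Subtype.mk.injEq]
    split_ifs with h
    · subst h
      have : (s i : 𝕜) ≠ 0 := by exact_mod_cast hi
      simp only [map_inv₀, RCLike.conj_ofReal]
      push_cast
      field_simp
    · simp
  obtain ⟨c, hc⟩ := hf.exists_orthonormalBasis_extension_of_card_eq (by simp)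
  have hTb : ∀ i, T (b i) = (s i : 𝕜) • c i := by
    intro i
    by_cases hi : s i = 0
    · rw [hi, RCLike.ofReal_zero, zero_smul, ← norm_eq_zero, hnorm, hi]
    · rw [hc i hi, smul_smul, mul_inv_cancel₀ (by exact_mod_cast hi), one_smul]
  exact ⟨b, c, s, fun i => T.singularValues_nonneg i, hTb, b.adjoint_apply_eq_smul c hTb⟩

theorem LinearMap.exists_linearIsometryEquiv_norm_sub_sq_le (T : E →ₗ[𝕜] E)
    (hT : ∀ x, ‖T x‖ ≤ ‖x‖) :
    ∃ W : E ≃ₗᵢ[𝕜] E, (∀ x, ‖W x - T x‖ ^ 2 ≤ ‖x‖ ^ 2 - ‖T x‖ ^ 2) ∧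
      ∀ x, ‖W.symm x - T.adjoint x‖ ^ 2 ≤ ‖x‖ ^ 2 - ‖T.adjoint x‖ ^ 2 := by
  obtain ⟨b, c, s, hs₀, hTb, hTc⟩ := T.exists_orthonormalBasis_apply_eq_smul
  have hs₁ : ∀ i, s i ≤ 1 := fun i => by
    simpa [hTb, norm_smul, abs_of_nonneg (hs₀ i)] using hT (b i)
  have hW : ∀ i, b.equiv c (.refl _) (b i) = c i := fun i => by simp
  refine ⟨b.equiv c (.refl _), fun x => ?_, fun x => ?_⟩
  · refine b.norm_sub_sq_le_of_inner_eq c hs₀ hs₁ (fun i => ?_) (fun i => ?_)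
    · rw [← hW, LinearIsometryEquiv.inner_map_map]
    · rw [← LinearMap.adjoint_inner_left, hTc, inner_smul_left, RCLike.conj_ofReal]
  · refine c.norm_sub_sq_le_of_inner_eq b hs₀ hs₁ (fun i => ?_) (fun i => ?_)
    · rw [← hW, LinearIsometryEquiv.inner_map_eq_flip]
    · rw [LinearMap.adjoint_inner_right, hTb, inner_smul_left, RCLike.conj_ofReal]

end FiniteDimensional

namespace Submodule

variable (K : Submodule 𝕜 E) [K.HasOrthogonalProjection]

def extendByIdentity (W : K ≃ₗᵢ[𝕜] K) : E ≃ₗᵢ[𝕜] E :=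
  K.orthogonalDecomposition.trans <|
    (LinearIsometryEquiv.withLpProdCongr 2 W (.refl 𝕜 Kᗮ)).trans K.orthogonalDecomposition.symm

variable {K}

theorem extendByIdentity_apply (W : K ≃ₗᵢ[𝕜] K) (x : E) :
    K.extendByIdentity W x = W (K.orthogonalProjectionOnto x) + (x - K.starProjection x) := by
  simp [extendByIdentity]

theorem extendByIdentity_symm (W : K ≃ₗᵢ[𝕜] K) :
    (K.extendByIdentity W).symm = K.extendByIdentity W.symm := by
  ext x
  rfl

variable (K) in
def compression (A : E →L[𝕜] E) : K →L[𝕜] K := K.orthogonalProjectionOnto ∘L A ∘L K.subtypeL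

theorem adjoint_compression [CompleteSpace E] [CompleteSpace K] (A : E →L[𝕜] E) :
    (K.compression A).adjoint = K.compression A.adjoint := by
  simp only [compression, ContinuousLinearMap.adjoint_comp, K.adjoint_subtypeL,
    K.adjoint_orthogonalProjectionOnto, ContinuousLinearMap.comp_assoc]

end Submodule

def compressionBound (P A : E →L[𝕜] E) (x : E) : ℝ :=
  √(‖P x‖ ^ 2 - ‖P (A (P x))‖ ^ 2) + ‖P (A (P x)) - A x‖ + ‖x - P x‖

theorem Submodule.norm_extendByIdentity_sub_le {K : Submodule 𝕜 E} [K.HasOrthogonalProjection]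
    (W : K ≃ₗᵢ[𝕜] K) (A : E →L[𝕜] E)
    (hW : ∀ y, ‖W y - K.compression A y‖ ^ 2 ≤ ‖y‖ ^ 2 - ‖K.compression A y‖ ^ 2) (x : E) :
    ‖K.extendByIdentity W x - A x‖ ≤ compressionBound K.starProjection A x := by
  set y := K.orthogonalProjectionOnto x
  have hsplit : K.extendByIdentity W x - A x = ((W y - K.compression A y : K) : E) +
      (K.compression A y - A x) + (x - K.starProjection x) := by
    rw [extendByIdentity_apply]; push_cast; abel
  rw [hsplit, compressionBound]
  exact norm_add₃_le.trans (by gcongr; exacts [Real.le_sqrt_of_sq_le (hW y), le_rfl])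

theorem IsStarProjection.exists_linearIsometryEquiv_le_compressionBound [CompleteSpace E]
    {P : E →L[𝕜] E} (hP : IsStarProjection P)
    [FiniteDimensional 𝕜 (LinearMap.range (P : E →ₗ[𝕜] E))] (U : E ≃ₗᵢ[𝕜] E) :
    ∃ V : E ≃ₗᵢ[𝕜] E, (∀ x, P x = 0 → V x = x) ∧ (∀ x, V (P x) = P (V (P x))) ∧
      (∀ x, ‖V x - U x‖ ≤ compressionBound P U x) ∧
      ∀ x, ‖V.symm x - U.symm x‖ ≤ compressionBound P U.symm x := by
  obtain ⟨_, hPK⟩ := isStarProjection_iff_eq_starProjection_range.1 hP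
  set K := LinearMap.range (P : E →ₗ[𝕜] E)
  rw [hPK]
  set T := K.compression U
  have hT : ∀ y, ‖T y‖ ≤ ‖y‖ := fun y =>
    (K.norm_starProjection_apply_le (U y)).trans_eq (U.norm_map y)
  have hTadj : T.adjoint = K.compression U.symm := by
    rw [K.adjoint_compression, LinearIsometryEquiv.adjoint_eq_symm]
  obtain ⟨W, hW, hWsymm⟩ := (T : K →ₗ[𝕜] K).exists_linearIsometryEquiv_norm_sub_sq_le hT
  rw [ContinuousLinearMap.adjoint_toLinearMap, hTadj] at hWsymm
  refine ⟨K.extendByIdentity W, fun x hx => ?_, fun x => ?_,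
    K.norm_extendByIdentity_sub_le W U hW, ?_⟩
  · rw [K.starProjection_apply_eq_zero_iff, ← K.orthogonalProjectionOnto_eq_zero_iff] at hx
    simp [K.extendByIdentity_apply, hx, ← K.coe_orthogonalProjectionOnto_apply]
  · rw [eq_comm, K.starProjection_eq_self_iff, K.extendByIdentity_apply]
    exact K.add_mem (W _).2 <|
      K.sub_mem (K.starProjection_apply_mem x) (K.starProjection_apply_mem _)
  · rw [K.extendByIdentity_symm]
    exact K.norm_extendByIdentity_sub_le W.symm U.symm hWsymm

theorem tendsto_of_norm_sub_le_compressionBound {P : ℕ → E →L[𝕜] E}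
    (hP : ∀ n x, ‖P n x‖ ≤ ‖x‖) (hlim : ∀ x, Tendsto (fun n => P n x) atTop (𝓝 x))
    {A : E →L[𝕜] E} (hA : ∀ x, ‖A x‖ = ‖x‖) {x : E} {f : ℕ → E}
    (hf : ∀ n, ‖f n - A x‖ ≤ compressionBound (P n) A x) :
    Tendsto f atTop (𝓝 (A x)) := by
  have hPAP : Tendsto (fun n => P n (A (P n x))) atTop (𝓝 (A x)) := by
    have hle : ∀ n, ‖P n (A (P n x)) - A x‖ ≤ ‖P n x - x‖ + ‖P n (A x) - A x‖ := fun n => by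
      calc ‖P n (A (P n x)) - A x‖ = ‖P n (A (P n x - x)) + (P n (A x) - A x)‖ := by
            rw [map_sub, map_sub]; abel_nf
        _ ≤ ‖P n x - x‖ + ‖P n (A x) - A x‖ :=
            (norm_add_le _ _).trans (by gcongr; exact (hP n _).trans_eq (hA _))
    have hlim' : ∀ y, Tendsto (fun n => ‖P n y - y‖) atTop (𝓝 0) := fun y =>
      tendsto_iff_norm_sub_tendsto_zero.1 (hlim y)
    rw [tendsto_iff_norm_sub_tendsto_zero]
    exact squeeze_zero (fun _ => norm_nonneg _) hle (by simpa using (hlim' x).add (hlim' (A x)))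
  have hbound : Tendsto (fun n => compressionBound (P n) A x) atTop (𝓝 0) := by
    have := ((((hlim x).norm.pow 2).sub (hPAP.norm.pow 2)).sqrt.add
      (hPAP.sub (tendsto_const_nhds (x := A x))).norm).add
      ((tendsto_const_nhds (x := x)).sub (hlim x)).norm
    simpa [compressionBound, hA] using this
  rw [tendsto_iff_norm_sub_tendsto_zero]
  exact squeeze_zero (fun _ => norm_nonneg _) hf hbound

end

theorem stmt4_general {H : Type} [NormedAddCommGroup H] [InnerProductSpace ℂ H] [CompleteSpace H]
    (u : H →L[ℂ] H) (hu : u ∈ unitary (H →L[ℂ] H))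
    (p : ℕ → H →L[ℂ] H)
    (hproj : ∀ n, IsIdempotentElem (p n) ∧ IsSelfAdjoint (p n))
    (hrank : ∀ n, FiniteDimensional ℂ (LinearMap.range (p n : H →ₗ[ℂ] H)))
    (hlim : ∀ ξ : H, Tendsto (fun n => p n ξ) atTop (𝓝 ξ)) :
    ∃ v : ℕ → H →L[ℂ] H,
      (∀ n, v n ∈ unitary (H →L[ℂ] H)) ∧
      (∀ n, ∀ ξ : H, p n ξ = 0 → v n ξ = ξ) ∧
      (∀ n, ∀ ξ : H, v n (p n ξ) = p n (v n (p n ξ))) ∧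
      (∀ ξ : H, Tendsto (fun n => v n ξ) atTop (𝓝 (u ξ))) ∧
      (∀ ξ : H, Tendsto (fun n => ContinuousLinearMap.adjoint (v n) ξ) atTop
        (𝓝 (ContinuousLinearMap.adjoint u ξ))) := by
  set U := Unitary.linearIsometryEquiv ⟨u, hu⟩
  have hU : (U : H →L[ℂ] H) = u := rfl
  have hP : ∀ n, IsStarProjection (p n) := fun n => ⟨(hproj n).1, (hproj n).2⟩
  have hPle : ∀ n ξ, ‖p n ξ‖ ≤ ‖ξ‖ := fun n ξ =>
    ((p n).le_of_opNorm_le ((hP n).norm_le) ξ).trans_eq (one_mul _)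
  choose V hV₀ hVp hV hVsymm using fun n =>
    have := hrank n
    (hP n).exists_linearIsometryEquiv_le_compressionBound U
  refine ⟨fun n => V n, fun n => (Unitary.linearIsometryEquiv.symm (V n)).2, hV₀, hVp,
    fun ξ => ?_, fun ξ => ?_⟩
  · rw [← hU]
    exact tendsto_of_norm_sub_le_compressionBound hPle hlim U.norm_map (hV · ξ)
  · simp only [LinearIsometryEquiv.adjoint_eq_symm, ← hU]
    exact tendsto_of_norm_sub_le_compressionBound hPle hlim U.symm.norm_map (hVsymm · ξ)

/-- Given a unitary `u` on a Hilbert space `H` and finite-rank orthogonal projections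
`pₙ ↑ 1` (*-strongly), there are unitaries `vₙ = uₙ ⊕ (1 - pₙ)` with `uₙ` a unitary of
`pₙH` (i.e. `vₙ` is the identity on `(pₙH)ᗮ` and preserves `pₙH`) such that `vₙ → u`
in the *-strong operator topology. -/
theorem stmt4 {H : Type} [NormedAddCommGroup H] [InnerProductSpace ℂ H] [CompleteSpace H]
    (u : H →L[ℂ] H) (hu : u ∈ unitary (H →L[ℂ] H))
    (p : ℕ → H →L[ℂ] H)
    (hproj : ∀ n, IsIdempotentElem (p n) ∧ IsSelfAdjoint (p n))
    (hrank : ∀ n, FiniteDimensional ℂ (LinearMap.range (p n : H →ₗ[ℂ] H)))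
    (hmono : ∀ m n, m ≤ n → p n ∘L p m = p m ∧ p m ∘L p n = p m)
    (hlim : ∀ ξ : H, Tendsto (fun n => p n ξ) atTop (𝓝 ξ)) :
    ∃ v : ℕ → H →L[ℂ] H,
      (∀ n, v n ∈ unitary (H →L[ℂ] H)) ∧
      (∀ n, ∀ ξ : H, p n ξ = 0 → v n ξ = ξ) ∧
      (∀ n, ∀ ξ : H, v n (p n ξ) = p n (v n (p n ξ))) ∧
      (∀ ξ : H, Tendsto (fun n => v n ξ) atTop (𝓝 (u ξ))) ∧
      (∀ ξ : H, Tendsto (fun n => ContinuousLinearMap.adjoint (v n) ξ) atTop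
        (𝓝 (ContinuousLinearMap.adjoint u ξ))) :=
  stmt4_general u hu p hproj hrank hlim
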